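/- Let Δ₀, Δ₁, Δ₂, … : [0,T] → ℝ (nonnegative) be continuous functions and φ : [0,T] → ℝ≥0 integrable. Suppose Δₙ(s) ≤ ∫ₛᵀ φ(r)(Δₙ(r) + Δₙ₋₁(r)) dr for all s ∈ [0,T] and n ≥ 1. Then, with c = exp(∫₀ᵀ φ(r) dr) and a = sup_{s∈[0,T]} Δ₀(s), one has Δₙ(s) ≤ a · cⁿ/n! · (∫ₛᵀ φ(r) dr)ⁿ for all s ∈ [0,T] and n ≥ 0; in particular Δₙ → 0 uniformly on [0,T]. -/

import Mathlib

/-!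
Write `F(s) = ∫ₛᵀ φ`. Since `F` is absolutely continuous with `F' = -φ` almost everywhere,
`∫ₛᵀ φ Fᵐ = F(s)ᵐ⁺¹ / (m + 1)`. Inserting the bound for `Δₙ` into the inequality for `Δₙ₊₁`
and using that `F` is antitone gives, for `s₀ ≤ s ≤ T`,
`Δₙ₊₁(s) ≤ a cⁿ F(s₀)ⁿ⁺¹ / (n + 1)! + ∫ₛᵀ φ Δₙ₊₁`. The backward Gronwall inequality on `[s₀, T]`
then costs one factor `exp F(s₀) ≤ c`. It is proved by Picard iteration: if `D ≤ A + ∫ₛᵀ φ D`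
and `D ≤ M`, then `D ≤ A ∑_{i<k} Fⁱ/i! + M Fᵏ/k!` for every `k`. Uniform convergence follows
from `(c F(0))ⁿ / n! → 0`.
-/

open MeasureTheory Set

theorem AbsolutelyContinuousOnInterval.pow {f : ℝ → ℝ} {a b : ℝ}
    (hf : AbsolutelyContinuousOnInterval f a b) (n : ℕ) :
    AbsolutelyContinuousOnInterval (fun x => f x ^ n) a b := by
  induction n with
  | zero => simpa using (contDiffOn_const (c := (1 : ℝ))).absolutelyContinuousOnInterval
  | succ n ih => simpa only [pow_succ] using ih.fun_mul hf

section TailIntegral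

variable {φ : ℝ → ℝ} {a b : ℝ}

theorem integral_mul_pow_integral_eq {s : ℝ} (hφ : IntervalIntegrable φ volume s b) (m : ℕ) :
    ∫ r in s..b, φ r * (∫ u in r..b, φ u) ^ m = (∫ r in s..b, φ r) ^ (m + 1) / (m + 1) := by
  set F : ℝ → ℝ := fun x => ∫ u in x..b, φ u
  have hF_eq : F = fun x => -∫ u in b..x, φ u := funext fun x => intervalIntegral.integral_symm _ _
  have hF : AbsolutelyContinuousOnInterval F s b := by
    rw [hF_eq]; exact (hφ.absolutelyContinuousOnInterval_intervalIntegral right_mem_uIcc).neg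
  have hF_deriv : ∀ᵐ x, x ∈ uIcc s b → HasDerivAt F (-φ x) x := by
    filter_upwards [hφ.ae_hasDerivAt_integral] with x hx hxI
    rw [hF_eq]; exact (hx hxI b right_mem_uIcc).neg
  have hFTC := (hF.pow (m + 1)).integral_deriv_eq_sub
  have hpow_deriv : ∫ x in s..b, deriv (fun x => F x ^ (m + 1)) x
      = ∫ x in s..b, -((m + 1) * (φ x * F x ^ m)) := by
    refine intervalIntegral.integral_congr_ae ?_
    filter_upwards [hF_deriv] with x hx hxI
    rw [((hx (uIoc_subset_uIcc hxI)).fun_pow (m + 1)).deriv]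
    push_cast; ring
  rw [hpow_deriv, intervalIntegral.integral_neg, intervalIntegral.integral_const_mul] at hFTC
  simp only [F, intervalIntegral.integral_same] at hFTC
  field_simp
  linear_combination -hFTC

theorem integral_mul_pow_integral_div_factorial {s : ℝ} (hφ : IntervalIntegrable φ volume s b)
    (m : ℕ) :
    ∫ r in s..b, φ r * ((∫ u in r..b, φ u) ^ m / m.factorial)
      = (∫ r in s..b, φ r) ^ (m + 1) / (m + 1).factorial := by
  simp_rw [← mul_div_assoc]
  rw [intervalIntegral.integral_div, integral_mul_pow_integral_eq hφ, Nat.factorial_succ]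
  push_cast
  rw [div_div, mul_comm]

theorem MeasureTheory.IntegrableOn.intervalIntegrable_of_mem_Icc (hφ : IntegrableOn φ (Icc a b))
    {s : ℝ} (hs : s ∈ Icc a b) : IntervalIntegrable φ volume s b :=
  (intervalIntegrable_iff_integrableOn_Icc_of_le hs.2).2 (hφ.mono_set (Icc_subset_Icc_left hs.1))

theorem integral_nonneg_of_forall_mem_Icc (hφ0 : ∀ r ∈ Icc a b, 0 ≤ φ r) {s : ℝ}
    (hs : s ∈ Icc a b) : 0 ≤ ∫ r in s..b, φ r :=
  intervalIntegral.integral_nonneg hs.2 fun r hr => hφ0 r ⟨hs.1.trans hr.1, hr.2⟩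

theorem continuousOn_integral_of_integrableOn_Icc (hφ : IntegrableOn φ (Icc a b)) :
    ContinuousOn (fun s => ∫ r in s..b, φ r) (Icc a b) := by
  rcases le_total a b with hab | hba
  · rw [← uIcc_of_le hab] at hφ ⊢
    exact intervalIntegral.continuousOn_primitive_interval_left hφ
  · exact (subsingleton_Icc_of_ge hba).continuousOn _

theorem antitoneOn_integral_of_nonneg (hφ : IntegrableOn φ (Icc a b))
    (hφ0 : ∀ r ∈ Icc a b, 0 ≤ φ r) :
    AntitoneOn (fun s => ∫ r in s..b, φ r) (Icc a b) := by
  intro s hs t ht hst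
  refine intervalIntegral.integral_mono_interval hst ht.2 le_rfl ?_ ?_
  · exact ae_restrict_of_forall_mem measurableSet_Ioc
      fun r hr => hφ0 r ⟨hs.1.trans hr.1.le, hr.2⟩
  · exact hφ.intervalIntegrable_of_mem_Icc hs

end TailIntegral

section Gronwall

variable {φ D : ℝ → ℝ} {a b A M : ℝ}

theorem le_sum_pow_div_factorial_of_le_add_integral (hφ : IntegrableOn φ (Icc a b))
    (hφ0 : ∀ r ∈ Icc a b, 0 ≤ φ r) (hD : ContinuousOn D (Icc a b))
    (hDM : ∀ s ∈ Icc a b, D s ≤ M) (h : ∀ s ∈ Icc a b, D s ≤ A + ∫ r in s..b, φ r * D r)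
    (k : ℕ) : ∀ s ∈ Icc a b,
      D s ≤ A * ∑ i ∈ Finset.range k, (∫ r in s..b, φ r) ^ i / i.factorial
        + M * ((∫ r in s..b, φ r) ^ k / k.factorial) := by
  induction k with
  | zero => simpa using hDM
  | succ k ih =>
    intro s hs
    set F : ℝ → ℝ := fun x => ∫ r in x..b, φ r
    have hφs := hφ.intervalIntegrable_of_mem_Icc hs
    have hIcc : uIcc s b ⊆ Icc a b := uIcc_subset_Icc hs ⟨hs.1.trans hs.2, le_rfl⟩
    have hFc := (continuousOn_integral_of_integrableOn_Icc hφ).mono hIcc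
    have hterm (m : ℕ) : IntervalIntegrable (fun r => φ r * (F r ^ m / m.factorial)) volume s b :=
      hφs.mul_continuousOn ((hFc.pow m).div_const _)
    have hsum : IntervalIntegrable
        (fun r => ∑ i ∈ Finset.range k, φ r * (F r ^ i / i.factorial)) volume s b := by
      simpa only [Finset.sum_fn] using IntervalIntegrable.sum (Finset.range k) fun i _ => hterm i
    have hψ : ∫ r in s..b, (A * ∑ i ∈ Finset.range k, φ r * (F r ^ i / i.factorial)
          + M * (φ r * (F r ^ k / k.factorial)))
        = A * ∑ i ∈ Finset.range k, F s ^ (i + 1) / (i + 1).factorial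
          + M * (F s ^ (k + 1) / (k + 1).factorial) := by
      rw [intervalIntegral.integral_add (hsum.const_mul A) ((hterm k).const_mul M),
        intervalIntegral.integral_const_mul, intervalIntegral.integral_const_mul,
        intervalIntegral.integral_finsetSum fun i _ => hterm i]
      simp only [F, integral_mul_pow_integral_div_factorial hφs]
    have hbound : ∫ r in s..b, φ r * D r ≤ ∫ r in s..b,
        (A * ∑ i ∈ Finset.range k, φ r * (F r ^ i / i.factorial)
          + M * (φ r * (F r ^ k / k.factorial))) := by
      refine intervalIntegral.integral_mono_on hs.2 (hφs.mul_continuousOn (hD.mono hIcc))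
        ((hsum.const_mul A).add ((hterm k).const_mul M)) fun r hr => ?_
      have hr' : r ∈ Icc a b := ⟨hs.1.trans hr.1, hr.2⟩
      calc φ r * D r ≤ φ r * (A * ∑ i ∈ Finset.range k, F r ^ i / i.factorial
            + M * (F r ^ k / k.factorial)) := mul_le_mul_of_nonneg_left (ih r hr') (hφ0 r hr')
        _ = _ := by
          rw [mul_add, Finset.mul_sum, Finset.mul_sum, Finset.mul_sum, mul_left_comm (φ r) M]
          congr 1
          exact Finset.sum_congr rfl fun i _ => by ring
    calc D s ≤ A + ∫ r in s..b, φ r * D r := h s hs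
      _ ≤ A + (A * ∑ i ∈ Finset.range k, F s ^ (i + 1) / (i + 1).factorial
            + M * (F s ^ (k + 1) / (k + 1).factorial)) := by grw [hbound, hψ]
      _ = _ := by
        rw [Finset.sum_range_succ', pow_zero, Nat.factorial_zero, Nat.cast_one, div_one]; ring

theorem le_mul_exp_integral_of_le_add_integral (hφ : IntegrableOn φ (Icc a b))
    (hφ0 : ∀ r ∈ Icc a b, 0 ≤ φ r) (hD : ContinuousOn D (Icc a b)) (hA : 0 ≤ A)
    (h : ∀ s ∈ Icc a b, D s ≤ A + ∫ r in s..b, φ r * D r) :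
    ∀ s ∈ Icc a b, D s ≤ A * Real.exp (∫ r in s..b, φ r) := by
  obtain ⟨M, hM⟩ := isCompact_Icc.bddAbove_image hD
  intro s hs
  set x := ∫ r in s..b, φ r
  have hx : 0 ≤ x := integral_nonneg_of_forall_mem_Icc hφ0 hs
  have hle (k : ℕ) : D s ≤ A * Real.exp x + M * (x ^ k / k.factorial) := by
    grw [le_sum_pow_div_factorial_of_le_add_integral hφ hφ0 hD (fun s hs => hM ⟨s, hs, rfl⟩) h k
      s hs, Real.sum_le_exp_of_nonneg hx]
  have hlim : Filter.Tendsto (fun k : ℕ => A * Real.exp x + M * (x ^ k / k.factorial))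
      Filter.atTop (nhds (A * Real.exp x)) := by
    simpa using (FloorSemiring.tendsto_pow_div_factorial_atTop x).const_mul M
      |>.const_add (A * Real.exp x)
  exact ge_of_tendsto' hlim hle

theorem le_mul_exp_integral_mul_pow_of_le_integral_mul_add {φ Δ Δ' : ℝ → ℝ} {a b K : ℝ} {n : ℕ}
    (hφ : IntegrableOn φ (Icc a b)) (hφ0 : ∀ r ∈ Icc a b, 0 ≤ φ r)
    (hΔ : ContinuousOn Δ (Icc a b)) (hΔ' : ContinuousOn Δ' (Icc a b)) (hK : 0 ≤ K)
    (hΔK : ∀ s ∈ Icc a b, Δ s ≤ K * (∫ r in s..b, φ r) ^ n)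
    (h : ∀ s ∈ Icc a b, Δ' s ≤ ∫ r in s..b, φ r * (Δ' r + Δ r)) :
    ∀ s ∈ Icc a b, Δ' s ≤
      K / (n + 1) * Real.exp (∫ r in s..b, φ r) * (∫ r in s..b, φ r) ^ (n + 1) := by
  intro s₀ hs₀
  have hsub : Icc s₀ b ⊆ Icc a b := Icc_subset_Icc_left hs₀.1
  set F : ℝ → ℝ := fun x => ∫ r in x..b, φ r
  have hF_le (s : ℝ) (hs : s ∈ Icc s₀ b) : F s ≤ F s₀ :=
    antitoneOn_integral_of_nonneg hφ hφ0 hs₀ (hsub hs) hs.1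
  have hgronwall (s : ℝ) (hs : s ∈ Icc s₀ b) :
      Δ' s ≤ K / (n + 1) * F s₀ ^ (n + 1) + ∫ r in s..b, φ r * Δ' r := by
    have hs' := hsub hs
    have hφs := hφ.intervalIntegrable_of_mem_Icc hs'
    have hIcc : uIcc s b ⊆ Icc a b := uIcc_subset_Icc hs' ⟨hs'.1.trans hs'.2, le_rfl⟩
    have hFc := (continuousOn_integral_of_integrableOn_Icc hφ).mono hIcc
    have hΔ_int : ∫ r in s..b, φ r * Δ r ≤ ∫ r in s..b, φ r * (K * F r ^ n) :=
      intervalIntegral.integral_mono_on hs.2 (hφs.mul_continuousOn (hΔ.mono hIcc))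
        (hφs.mul_continuousOn (continuousOn_const.mul (hFc.pow n))) fun r hr =>
          have hr' : r ∈ Icc a b := ⟨hs'.1.trans hr.1, hr.2⟩
          mul_le_mul_of_nonneg_left (hΔK r hr') (hφ0 r hr')
    have hF_pow : ∫ r in s..b, φ r * (K * F r ^ n) = K / (n + 1) * F s ^ (n + 1) := by
      simp_rw [mul_left_comm (φ _) K]
      rw [intervalIntegral.integral_const_mul, integral_mul_pow_integral_eq hφs]
      ring
    calc Δ' s ≤ ∫ r in s..b, φ r * (Δ' r + Δ r) := h s hs'
      _ = (∫ r in s..b, φ r * Δ' r) + ∫ r in s..b, φ r * Δ r := by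
        simp_rw [mul_add]
        exact intervalIntegral.integral_add (hφs.mul_continuousOn (hΔ'.mono hIcc))
          (hφs.mul_continuousOn (hΔ.mono hIcc))
      _ ≤ (∫ r in s..b, φ r * Δ' r) + K / (n + 1) * F s ^ (n + 1) := by rw [← hF_pow]; gcongr
      _ ≤ K / (n + 1) * F s₀ ^ (n + 1) + ∫ r in s..b, φ r * Δ' r := by
        have := integral_nonneg_of_forall_mem_Icc hφ0 hs'
        grw [hF_le s hs]; linarith
  have hA : 0 ≤ K / (n + 1) * F s₀ ^ (n + 1) :=
    mul_nonneg (by positivity) (pow_nonneg (integral_nonneg_of_forall_mem_Icc hφ0 hs₀) _)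
  have := le_mul_exp_integral_of_le_add_integral (hφ.mono_set hsub) (fun r hr => hφ0 r (hsub hr))
    (hΔ'.mono hsub) hA hgronwall s₀ (left_mem_Icc.2 hs₀.2)
  exact this.trans_eq (by ring)

theorem le_mul_exp_pow_div_factorial_of_le_integral_mul_add {φ : ℝ → ℝ} {Δ : ℕ → ℝ → ℝ}
    {a b A : ℝ} (hφ : IntegrableOn φ (Icc a b)) (hφ0 : ∀ r ∈ Icc a b, 0 ≤ φ r)
    (hΔ : ∀ n, ContinuousOn (Δ n) (Icc a b)) (hA : 0 ≤ A) (hΔA : ∀ s ∈ Icc a b, Δ 0 s ≤ A)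
    (hrec : ∀ n, ∀ s ∈ Icc a b, Δ (n + 1) s ≤ ∫ r in s..b, φ r * (Δ (n + 1) r + Δ n r))
    (n : ℕ) : ∀ s ∈ Icc a b,
      Δ n s ≤ A * Real.exp (∫ r in a..b, φ r) ^ n / n.factorial * (∫ r in s..b, φ r) ^ n := by
  set c := Real.exp (∫ r in a..b, φ r)
  induction n with
  | zero => simpa using hΔA
  | succ n ih =>
    intro s hs
    have hF_le : ∫ r in s..b, φ r ≤ ∫ r in a..b, φ r :=
      antitoneOn_integral_of_nonneg hφ hφ0 (left_mem_Icc.2 (hs.1.trans hs.2)) hs hs.1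
    have := integral_nonneg_of_forall_mem_Icc hφ0 hs
    calc Δ (n + 1) s
        ≤ A * c ^ n / n.factorial / (n + 1) * Real.exp (∫ r in s..b, φ r)
          * (∫ r in s..b, φ r) ^ (n + 1) :=
          le_mul_exp_integral_mul_pow_of_le_integral_mul_add hφ hφ0 (hΔ n) (hΔ (n + 1))
            (by positivity) ih (hrec n) s hs
      _ ≤ A * c ^ n / n.factorial / (n + 1) * c * (∫ r in s..b, φ r) ^ (n + 1) := by
          gcongr; exact Real.exp_le_exp.2 hF_le
      _ = A * c ^ (n + 1) / (n + 1).factorial * (∫ r in s..b, φ r) ^ (n + 1) := by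
          rw [Nat.factorial_succ, Nat.cast_mul, Nat.cast_succ]; field_simp; ring

end Gronwall

theorem tendstoUniformlyOn_zero_of_le_pow_div_factorial {α : Type*} {f : ℕ → α → ℝ} {S : Set α}
    {C x : ℝ} (hf0 : ∀ n, ∀ s ∈ S, 0 ≤ f n s)
    (hf : ∀ n, ∀ s ∈ S, f n s ≤ C * (x ^ n / n.factorial)) :
    TendstoUniformlyOn f (fun _ => 0) Filter.atTop S := by
  rw [Metric.tendstoUniformlyOn_iff]
  intro ε hε
  have hlim := (FloorSemiring.tendsto_pow_div_factorial_atTop x).const_mul C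
  rw [mul_zero] at hlim
  filter_upwards [hlim.eventually_lt_const hε] with n hn s hs
  rw [dist_zero_left, Real.norm_of_nonneg (hf0 n s hs)]
  exact (hf n s hs).trans_lt hn

theorem stmt_7_general (T : ℝ) (Δ : ℕ → ℝ → ℝ) (φ : ℝ → ℝ)
    (hφint : IntegrableOn φ (Set.Icc 0 T))
    (hφ0 : ∀ r, 0 ≤ φ r)
    (hΔcont : ∀ n, ContinuousOn (Δ n) (Set.Icc 0 T))
    (hΔ0 : ∀ n s, 0 ≤ Δ n s)
    (hrec : ∀ n : ℕ, 1 ≤ n → ∀ s ∈ Set.Icc (0 : ℝ) T,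
      Δ n s ≤ ∫ r in s..T, φ r * (Δ n r + Δ (n - 1) r)) :
    (∀ n : ℕ, ∀ s ∈ Set.Icc (0 : ℝ) T,
        Δ n s ≤ sSup (Δ 0 '' Set.Icc 0 T) * (Real.exp (∫ r in (0 : ℝ)..T, φ r)) ^ n
          / (n.factorial : ℝ) * (∫ r in s..T, φ r) ^ n) ∧
      TendstoUniformlyOn (fun n s => Δ n s) (fun _ => (0 : ℝ)) Filter.atTop
        (Set.Icc 0 T) := by
  set a := sSup (Δ 0 '' Icc 0 T)
  set c := Real.exp (∫ r in (0 : ℝ)..T, φ r)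
  have ha : 0 ≤ a := Real.sSup_nonneg (by rintro _ ⟨s, -, rfl⟩; exact hΔ0 0 s)
  have hφ0' : ∀ r ∈ Icc 0 T, 0 ≤ φ r := fun r _ => hφ0 r
  have hbound := le_mul_exp_pow_div_factorial_of_le_integral_mul_add hφint hφ0' hΔcont ha
    (fun s hs => le_csSup (isCompact_Icc.bddAbove_image (hΔcont 0)) ⟨s, hs, rfl⟩)
    (fun n => by simpa only [Nat.add_sub_cancel] using hrec (n + 1) n.succ_pos)
  refine ⟨hbound, tendstoUniformlyOn_zero_of_le_pow_div_factorial (C := a)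
    (x := c * ∫ r in (0 : ℝ)..T, φ r) (fun n s _ => hΔ0 n s) fun n s hs => ?_⟩
  have hF_le : ∫ r in s..T, φ r ≤ ∫ r in (0 : ℝ)..T, φ r :=
    antitoneOn_integral_of_nonneg hφint hφ0' (left_mem_Icc.2 (hs.1.trans hs.2)) hs hs.1
  have := integral_nonneg_of_forall_mem_Icc hφ0' hs
  calc Δ n s ≤ a * c ^ n / n.factorial * (∫ r in s..T, φ r) ^ n := hbound n s hs
    _ ≤ a * c ^ n / n.factorial * (∫ r in (0 : ℝ)..T, φ r) ^ n := by gcongr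
    _ = a * ((c * ∫ r in (0 : ℝ)..T, φ r) ^ n / n.factorial) := by ring

/-- Iterated backward Gronwall estimate: if `Δₙ(s) ≤ ∫ₛᵀ φ(r)(Δₙ(r) + Δₙ₋₁(r)) dr` for `n ≥ 1`,
then `Δₙ(s) ≤ a cⁿ/n! (∫ₛᵀ φ)ⁿ` with `c = exp(∫₀ᵀ φ)`, `a = sup Δ₀`; in particular `Δₙ → 0`
uniformly on `[0,T]`. -/
theorem stmt_7 (T : ℝ) (hT : 0 < T) (Δ : ℕ → ℝ → ℝ) (φ : ℝ → ℝ)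
    (hφint : IntegrableOn φ (Set.Icc 0 T))
    (hφ0 : ∀ r, 0 ≤ φ r)
    (hΔcont : ∀ n, ContinuousOn (Δ n) (Set.Icc 0 T))
    (hΔ0 : ∀ n s, 0 ≤ Δ n s)
    (hrec : ∀ n : ℕ, 1 ≤ n → ∀ s ∈ Set.Icc (0 : ℝ) T,
      Δ n s ≤ ∫ r in s..T, φ r * (Δ n r + Δ (n - 1) r)) :
    (∀ n : ℕ, ∀ s ∈ Set.Icc (0 : ℝ) T,
        Δ n s ≤ sSup (Δ 0 '' Set.Icc 0 T) * (Real.exp (∫ r in (0 : ℝ)..T, φ r)) ^ n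
          / (n.factorial : ℝ) * (∫ r in s..T, φ r) ^ n) ∧
      TendstoUniformlyOn (fun n s => Δ n s) (fun _ => (0 : ℝ)) Filter.atTop
        (Set.Icc 0 T) :=
  stmt_7_general T Δ φ hφint hφ0 hΔcont hΔ0 hrec
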